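/- arXiv:2505.13865 — 7 statements merged into one kernel-verified Lean document; each statement's English description precedes it below -/
import Mathlib

section
/- If a linear order ≺ on the edge set of an acyclic directed graph satisfies the nesting condition (Q₂), then it satisfies (U₂): for every vertex v, the convex hulls of the incoming edge set I(v) and the outgoing edge set O(v) are disjoint, and the convex hull of E(v) = I(v) ∪ O(v) equals the disjoint union of the convex hulls of I(v) and O(v). -/
structure Digraph' (V E : Type) where
  s : E → V
  t : E → V

def conv {E : Type} [LinearOrder E] (X : Set E) : Set E :=
  {y | ∃ a ∈ X, ∃ b ∈ X, a ≤ y ∧ y ≤ b}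

namespace Digraph'

variable {V E : Type} (G : Digraph' V E)

/-- One edge can be followed by another. -/
def step (e f : E) : Prop := G.t e = G.s f

/-- The reachable order: a directed path starts with `e₁` and ends with `e₂`
(including the case `e₁ = e₂`). -/
def reach : E → E → Prop := Relation.ReflTransGen G.step

/-- No directed cycles. -/
def Acyclic : Prop := ∀ e, ¬ Relation.TransGen G.step e e

/-- Incoming edges of a vertex. -/
def I (v : V) : Set E := {e | G.t e = v}

/-- Outgoing edges of a vertex. -/
def O (v : V) : Set E := {e | G.s e = v}

/-- All edges incident to a vertex `v` (incoming or outgoing). -/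
def Ev (v : V) : Set E := G.I v ∪ G.O v

variable [LinearOrder E]

/-- (U₁): reachability implies order. -/
def U1 : Prop := ∀ e₁ e₂ : E, G.reach e₁ e₂ → e₁ ≤ e₂

/-- (U₂): for every vertex, the hulls of incoming and outgoing edges are disjoint and
together give the hull of all incident edges. -/
def U2 : Prop := ∀ v : V,
  conv (G.I v) ∩ conv (G.O v) = ∅ ∧ conv (G.Ev v) = conv (G.I v) ∪ conv (G.O v)

/-- (U₃). -/
def U3 : Prop := ∀ v₁ v₂ : V,
  ((G.I v₁ ∩ conv (G.I v₂)).Nonempty → conv (G.I v₁) ⊆ conv (G.I v₂)) ∧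
  ((G.O v₁ ∩ conv (G.O v₂)).Nonempty → conv (G.O v₁) ⊆ conv (G.O v₂))

/-- (Q₂), the nesting condition. -/
def Q2 : Prop := ∀ e₁ e e₂ : E, e₁ < e → e < e₂ →
  (G.t e₁ = G.t e₂ → G.I (G.t e) ⊆ conv (G.I (G.t e₁))) ∧
  (G.s e₁ = G.s e₂ → G.O (G.s e) ⊆ conv (G.O (G.s e₁))) ∧
  (G.t e₁ = G.s e₂ →
    G.I (G.t e) ⊆ conv (G.I (G.t e₁)) ∨ G.O (G.s e) ⊆ conv (G.O (G.s e₂)))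

end Digraph'

/-!
By (Q₁) and acyclicity, every incoming edge of `v` precedes every outgoing edge of `v`, so the
two hulls are disjoint. A point of `conv (Ev v)` that is not already in one of them lies strictly
between an incoming and an outgoing edge of `v`, and clause (c) of (Q₂) puts it into one of the
two hulls.
-/

section Conv

variable {E : Type} [LinearOrder E] {X Y : Set E}

theorem subset_conv : X ⊆ conv X := fun x hx => ⟨x, hx, x, hx, le_rfl, le_rfl⟩

theorem conv_mono (h : X ⊆ Y) : conv X ⊆ conv Y := by
  rintro y ⟨a, ha, b, hb, hay, hyb⟩
  exact ⟨a, h ha, b, h hb, hay, hyb⟩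

theorem conv_inter_conv_eq_empty_of_lt (hXY : ∀ a ∈ X, ∀ b ∈ Y, a < b) :
    conv X ∩ conv Y = ∅ := by
  refine Set.eq_empty_of_forall_notMem ?_
  rintro y ⟨⟨-, -, b, hb, -, hyb⟩, ⟨c, hc, -, -, hcy, -⟩⟩
  exact (hXY b hb c hc).not_ge (hcy.trans hyb)

theorem conv_union_eq_of_lt (hXY : ∀ a ∈ X, ∀ b ∈ Y, a < b)
    (hgap : ∀ a ∈ X, ∀ b ∈ Y, ∀ y, a < y → y < b → y ∈ conv X ∪ conv Y) :
    conv (X ∪ Y) = conv X ∪ conv Y := by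
  refine (Set.union_subset (conv_mono Set.subset_union_left)
    (conv_mono Set.subset_union_right)).antisymm' ?_
  rintro y ⟨a, ha | ha, b, hb | hb, hay, hyb⟩
  · exact Or.inl ⟨a, ha, b, hb, hay, hyb⟩
  · rcases hay.eq_or_lt with rfl | hay
    · exact Or.inl (subset_conv ha)
    rcases hyb.eq_or_lt with rfl | hyb
    · exact Or.inr (subset_conv hb)
    exact hgap a ha b hb y hay hyb
  · exact absurd (hay.trans hyb) (hXY b hb a ha).not_ge
  · exact Or.inr ⟨a, ha, b, hb, hay, hyb⟩

end Conv

namespace Digraph'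

variable {V E : Type} [LinearOrder E] (G : Digraph' V E)

theorem lt_of_mem_I_of_mem_O (hG : G.Acyclic) (hQ1 : G.U1) {v : V} {e f : E}
    (he : e ∈ G.I v) (hf : f ∈ G.O v) : e < f := by
  have hstep : G.step e f := he.trans hf.symm
  refine (hQ1 e f (.single hstep)).lt_of_ne ?_
  rintro rfl
  exact hG e (.single hstep)

theorem mem_conv_I_union_conv_O_of_lt_of_lt (hQ2 : G.Q2) {v : V} {a b y : E}
    (ha : a ∈ G.I v) (hb : b ∈ G.O v) (hay : a < y) (hyb : y < b) :
    y ∈ conv (G.I v) ∪ conv (G.O v) := by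
  have ha : G.t a = v := ha
  have hb : G.s b = v := hb
  rcases (hQ2 a y b hay hyb).2.2 (ha.trans hb.symm) with h | h
  · exact Or.inl (ha ▸ h rfl)
  · exact Or.inr (hb ▸ h rfl)

end Digraph'

open Digraph' in
theorem U2_of_Q2_general {V E : Type} [LinearOrder E]
    (G : Digraph' V E) (hG : G.Acyclic) (hQ1 : G.U1) (hQ2 : G.Q2) :
    G.U2 := by
  intro v
  have hIO : ∀ e ∈ G.I v, ∀ f ∈ G.O v, e < f := fun _ he _ hf =>
    G.lt_of_mem_I_of_mem_O hG hQ1 he hf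
  exact ⟨conv_inter_conv_eq_empty_of_lt hIO, conv_union_eq_of_lt hIO fun _ ha _ hb _ =>
    G.mem_conv_I_union_conv_O_of_lt_of_lt hQ2 ha hb⟩

open Digraph' in
/-- (Q₂) (together with (Q₁)) implies (U₂). -/
theorem U2_of_Q2 {V E : Type} [Fintype V] [Fintype E] [LinearOrder E]
    (G : Digraph' V E) (hG : G.Acyclic) (hQ1 : G.U1) (hQ2 : G.Q2) :
    G.U2 :=
  U2_of_Q2_general G hG hQ1 hQ2
end

section
/- If a linear order ≺ on the edge set of an acyclic directed graph satisfies (Q₁) and the nesting condition (Q₂), then it satisfies (U₃): for any two vertices v₁ and v₂, if I(v₁) meets the convex hull of I(v₂) then conv(I(v₁)) ⊆ conv(I(v₂)), and if O(v₁) meets the convex hull of O(v₂) then conv(O(v₁)) ⊆ conv(O(v₂)). -/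
/-! Both halves of (U₃) are the same statement about the fibres of a map `f : E → V`
(`f = t` for incoming, `f = s` for outgoing edges). A witness `e` in the fibre of `v₁` with
`a ≤ e ≤ b` for `a`, `b` in the fibre of `v₂` either lies in that fibre itself, or sits strictly
between `a` and `b`; then the nesting condition puts the whole fibre of `v₁` into the hull of the
fibre of `v₂`, and taking hulls is idempotent. -/

section conv

variable {E : Type} [LinearOrder E]

lemma conv_subset_of_subset_conv {X Y : Set E} (h : X ⊆ conv Y) : conv X ⊆ conv Y := by
  rintro y ⟨a, ha, b, hb, hay, hyb⟩
  obtain ⟨a', ha', -, -, ha'a, -⟩ := h ha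
  obtain ⟨-, -, b', hb', -, hbb'⟩ := h hb
  exact ⟨a', ha', b', hb', ha'a.trans hay, hyb.trans hbb'⟩

lemma conv_fiber_subset_conv_fiber {V : Type} (f : E → V)
    (hnest : ∀ e₁ e e₂ : E, e₁ < e → e < e₂ → f e₁ = f e₂ →
      {x | f x = f e} ⊆ conv {x | f x = f e₁})
    {v₁ v₂ : V} (h : ({x | f x = v₁} ∩ conv {x | f x = v₂}).Nonempty) :
    conv {x | f x = v₁} ⊆ conv {x | f x = v₂} := by
  obtain ⟨e, rfl, a, rfl, b, hb, hae, heb⟩ := h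
  by_cases hea : f e = f a
  · rw [hea]
  have hae' : a < e := hae.lt_of_ne (ne_of_apply_ne f (Ne.symm hea))
  have heb' : e < b := heb.lt_of_ne fun heq => hea (heq ▸ hb)
  exact conv_subset_of_subset_conv (hnest a e b hae' heb' hb.symm)

end conv

open Digraph' in
theorem U3_of_Q1_Q2_general {V E : Type} [LinearOrder E]
    (G : Digraph' V E) (hQ2 : G.Q2) :
    G.U3 := fun _ _ =>
  ⟨conv_fiber_subset_conv_fiber G.t fun e₁ e e₂ h₁ h₂ => (hQ2 e₁ e e₂ h₁ h₂).1,
    conv_fiber_subset_conv_fiber G.s fun e₁ e e₂ h₁ h₂ => (hQ2 e₁ e e₂ h₁ h₂).2.1⟩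

open Digraph' in
/-- (Q₁) and (Q₂) imply (U₃). -/
theorem U3_of_Q1_Q2 {V E : Type} [Fintype V] [Fintype E] [LinearOrder E]
    (G : Digraph' V E) (hG : G.Acyclic) (hQ1 : G.U1) (hQ2 : G.Q2) :
    G.U3 :=
  U3_of_Q1_Q2_general G hQ2
end

section
/- If a linear order ≺ on the edge set of an acyclic directed graph satisfies (U₁), (U₂) and (U₃), then it satisfies the nesting condition (Q₂). -/
theorem subset_conv_s6 {E : Type} [LinearOrder E] (X : Set E) : X ⊆ conv X :=
  fun x hx => ⟨x, hx, x, hx, le_rfl, le_rfl⟩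

theorem mem_conv_of_le_of_le {E : Type} [LinearOrder E] {X : Set E} {a y b : E}
    (ha : a ∈ X) (hb : b ∈ X) (hay : a ≤ y) (hyb : y ≤ b) : y ∈ conv X :=
  ⟨a, ha, b, hb, hay, hyb⟩

namespace Digraph'

variable {V E : Type} [LinearOrder E] {G : Digraph' V E}

theorem I_subset_conv_I_of_mem (hU3 : G.U3) {v : V} {e : E} (he : e ∈ conv (G.I v)) :
    G.I (G.t e) ⊆ conv (G.I v) :=
  ((hU3 (G.t e) v).1 ⟨e, rfl, he⟩).trans' (subset_conv_s6 _)

theorem O_subset_conv_O_of_mem (hU3 : G.U3) {v : V} {e : E} (he : e ∈ conv (G.O v)) :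
    G.O (G.s e) ⊆ conv (G.O v) :=
  ((hU3 (G.s e) v).2 ⟨e, rfl, he⟩).trans' (subset_conv_s6 _)

theorem mem_conv_I_or_mem_conv_O (hU2 : G.U2) {v : V} {e : E} (he : e ∈ conv (G.Ev v)) :
    e ∈ conv (G.I v) ∨ e ∈ conv (G.O v) := by
  rwa [(hU2 v).2] at he

end Digraph'

open Digraph' in
theorem Q2_of_U1_U2_U3_general {V E : Type} [LinearOrder E]
    (G : Digraph' V E) (hU2 : G.U2) (hU3 : G.U3) :
    G.Q2 := by
  intro e₁ e e₂ h₁ h₂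
  refine ⟨fun hv => ?_, fun hv => ?_, fun hv => ?_⟩
  · exact I_subset_conv_I_of_mem hU3 (mem_conv_of_le_of_le rfl hv.symm h₁.le h₂.le)
  · exact O_subset_conv_O_of_mem hU3 (mem_conv_of_le_of_le rfl hv.symm h₁.le h₂.le)
  · have he : e ∈ conv (G.Ev (G.t e₁)) :=
      mem_conv_of_le_of_le (Or.inl rfl) (Or.inr hv.symm) h₁.le h₂.le
    rcases mem_conv_I_or_mem_conv_O hU2 he with hI | hO
    · exact Or.inl (I_subset_conv_I_of_mem hU3 hI)
    · exact Or.inr (O_subset_conv_O_of_mem hU3 (hv ▸ hO))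

open Digraph' in
/-- (U₁), (U₂) and (U₃) imply the nesting condition (Q₂). -/
theorem Q2_of_U1_U2_U3 {V E : Type} [Fintype V] [Fintype E] [LinearOrder E]
    (G : Digraph' V E) (hG : G.Acyclic) (hU1 : G.U1) (hU2 : G.U2) (hU3 : G.U3) :
    G.Q2 :=
  Q2_of_U1_U2_U3_general G hU2 hU3
end

section
/- Let ≺ be a linear order on E(G) satisfying the nesting condition (Q₂). Then for every processive vertex v there is no edge e with I(v)⁺ ≺ e ≺ O(v)⁻. -/
theorem notMem_conv_of_forall_lt {E : Type} [LinearOrder E] {X : Set E} {e : E}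
    (h : ∀ x ∈ X, x < e) : e ∉ conv X := by
  rintro ⟨-, -, b, hb, -, heb⟩
  exact (h b hb).not_ge heb

theorem notMem_conv_of_forall_gt {E : Type} [LinearOrder E] {X : Set E} {e : E}
    (h : ∀ x ∈ X, e < x) : e ∉ conv X := by
  rintro ⟨a, ha, -, -, hae, -⟩
  exact (h a ha).not_ge hae

namespace Digraph'

variable {V E : Type} [LinearOrder E] {G : Digraph' V E}

theorem Q2.mem_conv_I_or_mem_conv_O (hQ2 : G.Q2) {v : V} {i e o : E} (hi : i ∈ G.I v)
    (ho : o ∈ G.O v) (hie : i < e) (heo : e < o) :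
    e ∈ conv (G.I v) ∨ e ∈ conv (G.O v) := by
  have hv : G.t i = v := hi
  have hv' : G.s o = v := ho
  rcases (hQ2 i e o hie heo).2.2 (hv.trans hv'.symm) with h | h
  · exact .inl (hv ▸ h rfl)
  · exact .inr (hv' ▸ h rfl)

end Digraph'

open Digraph' in
theorem no_edge_between_of_Q2_general {V E : Type} [LinearOrder E]
    (G : Digraph' V E) (hQ2 : G.Q2)
    (v : V) (hI : (G.I v).Nonempty) (hO : (G.O v).Nonempty) :
    ¬ ∃ e : E, (∀ i ∈ G.I v, i < e) ∧ (∀ o ∈ G.O v, e < o) := by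
  rintro ⟨e, hIe, hOe⟩
  obtain ⟨i, hi⟩ := hI
  obtain ⟨o, ho⟩ := hO
  rcases hQ2.mem_conv_I_or_mem_conv_O hi ho (hIe i hi) (hOe o ho) with h | h
  · exact notMem_conv_of_forall_lt hIe h
  · exact notMem_conv_of_forall_gt hOe h

open Digraph' in
/-- Under the nesting condition (Q₂), for every processive vertex `v` there is no
edge strictly between `I(v)⁺` and `O(v)⁻`. -/
theorem no_edge_between_of_Q2 {V E : Type} [Fintype V] [Fintype E] [LinearOrder E]
    (G : Digraph' V E) (hG : G.Acyclic) (hQ2 : G.Q2)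
    (v : V) (hI : (G.I v).Nonempty) (hO : (G.O v).Nonempty) :
    ¬ ∃ e : E, (∀ i ∈ G.I v, i < e) ∧ (∀ o ∈ G.O v, e < o) :=
  no_edge_between_of_Q2_general G hQ2 v hI hO
end

section
/- The composition of upward planar orders on progressive graphs is associative: given composable admissible UPO-graphs (G₁,σ₁,≺₁), (G₂,σ₂,≺₂), (G₃,σ₃,≺₃), one has (≺₃ ∘ ≺₂) ∘ ≺₁ = ≺₃ ∘ (≺₂ ∘ ≺₁) as linear orders on E(G₃ ∘ G₂ ∘ G₁). -/
/-!
Both composites restrict to `≺ₖ` on the edges of each `Gₖ`, and between edges of different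
layers each of them is described by the same intrinsic condition: `a ∈ E(G₁)` weakly precedes
`c ∈ E(G₃)` iff there is a chain `a ≼₁ o ≡ i ≼₂ b ≡ i' ≼₃ c` through identified edges, and
similarly for the pairs `(G₁, G₂)` and `(G₂, G₃)`. This comes from the shuffle rule, once it
is extended to identified edges. Since both orders are total, agreement on pairs listed by
increasing layer forces them to coincide.
-/

/-- A progressive graph: a directed (multi)graph with sources `s`, targets `t`, and
a distinguished boundary set `σ` of vertices. -/
structure PGraph where
  V : Type
  E : Type
  s : E → V
  t : E → V
  σ : Set V

namespace PGraph

variable (G : PGraph)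

/-- One edge can be followed by another. -/
def step (e f : G.E) : Prop := G.t e = G.s f

/-- The reachable order: a directed path starts with `e₁` and ends with `e₂`. -/
def reach : G.E → G.E → Prop := Relation.ReflTransGen G.step

/-- No directed cycles. -/
def Acyclic : Prop := ∀ e, ¬ Relation.TransGen G.step e e

/-- Incoming edges of a vertex. -/
def I (v : G.V) : Set G.E := {e | G.t e = v}

/-- Outgoing edges of a vertex. -/
def O (v : G.V) : Set G.E := {e | G.s e = v}

/-- An input edge: it starts at a boundary vertex. -/
def InputEdge (e : G.E) : Prop := G.s e ∈ G.σ

/-- An output edge: it ends at a boundary vertex. -/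
def OutputEdge (e : G.E) : Prop := G.t e ∈ G.σ

/-- An inner vertex. -/
def Inner (v : G.V) : Prop := v ∉ G.σ

/-- An input vertex: a boundary vertex which is a source. -/
def InputVertex (v : G.V) : Prop := v ∈ G.σ ∧ ∃ e, G.s e = v

/-- An output vertex: a boundary vertex which is a sink. -/
def OutputVertex (v : G.V) : Prop := v ∈ G.σ ∧ ∃ e, G.t e = v

/-- The boundary consists of leaves: every boundary vertex has exactly one
incident edge-end. -/
def Progressive : Prop := ∀ v ∈ G.σ, ∃! e : G.E, G.s e = v ∨ G.t e = v

/-- The reflexive closure of a strict order on edges. -/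
def le (lt : G.E → G.E → Prop) (a b : G.E) : Prop := lt a b ∨ a = b

/-- The convex hull of a set of edges with respect to a linear order `lt`. -/
def conv (lt : G.E → G.E → Prop) (X : Set G.E) : Set G.E :=
  {y | ∃ a ∈ X, ∃ b ∈ X, G.le lt a y ∧ G.le lt y b}

/-- (Q₁): the reachable order implies the linear order. -/
def Q1 (lt : G.E → G.E → Prop) : Prop :=
  ∀ e₁ e₂, G.reach e₁ e₂ → G.le lt e₁ e₂

/-- (Q₂), the nesting condition. -/
def Q2 (lt : G.E → G.E → Prop) : Prop :=
  ∀ e₁ e e₂ : G.E, lt e₁ e → lt e e₂ →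
    (G.t e₁ = G.t e₂ → G.I (G.t e) ⊆ G.conv lt (G.I (G.t e₁))) ∧
    (G.s e₁ = G.s e₂ → G.O (G.s e) ⊆ G.conv lt (G.O (G.s e₁))) ∧
    (G.t e₁ = G.s e₂ →
      G.I (G.t e) ⊆ G.conv lt (G.I (G.t e₁)) ∨ G.O (G.s e) ⊆ G.conv lt (G.O (G.s e₂)))

/-- An upward planar order: a linear (strict total) order on edges satisfying
(Q₁) and the nesting condition (Q₂). -/
def UPO (lt : G.E → G.E → Prop) : Prop :=
  IsStrictTotalOrder G.E lt ∧ G.Q1 lt ∧ G.Q2 lt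

/-- Admissibility: for every inner vertex `v`, input edges avoid `conv (O v)` and
output edges avoid `conv (I v)`. -/
def Admissible (lt : G.E → G.E → Prop) : Prop :=
  ∀ v : G.V, G.Inner v →
    (∀ e, G.InputEdge e → e ∉ G.conv lt (G.O v)) ∧
    (∀ e, G.OutputEdge e → e ∉ G.conv lt (G.I v))

end PGraph

/-- Data exhibiting `G` as the composite `G₂ ∘ G₁` of two progressive graphs:
the edges of `G₁` and `G₂` embed into those of `G` via `j₁`, `j₂`, overlapping
exactly on the output edges of `G₁`, identified with the input edges of `G₂`;
the removed boundary vertices are the output vertices of `G₁` and the input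
vertices of `G₂`, and the boundary of `G` is the union of the input vertices of
`G₁` and the output vertices of `G₂`. -/
structure CompData (G₁ G₂ G : PGraph) where
  j₁ : G₁.E → G.E
  j₂ : G₂.E → G.E
  k₁ : G₁.V → G.V
  k₂ : G₂.V → G.V
  inj₁ : Function.Injective j₁
  inj₂ : Function.Injective j₂
  coverE : ∀ e : G.E, (∃ a, j₁ a = e) ∨ (∃ b, j₂ b = e)
  glue : ∀ a b, j₁ a = j₂ b → G₁.OutputEdge a ∧ G₂.InputEdge b
  glueOut : ∀ a, G₁.OutputEdge a → ∃ b, G₂.InputEdge b ∧ j₁ a = j₂ b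
  glueIn : ∀ b, G₂.InputEdge b → ∃ a, G₁.OutputEdge a ∧ j₁ a = j₂ b
  src₁ : ∀ a, G.s (j₁ a) = k₁ (G₁.s a)
  tgt₁ : ∀ a, ¬ G₁.OutputEdge a → G.t (j₁ a) = k₁ (G₁.t a)
  tgt₂ : ∀ b, G.t (j₂ b) = k₂ (G₂.t b)
  src₂ : ∀ b, ¬ G₂.InputEdge b → G.s (j₂ b) = k₂ (G₂.s b)
  injV₁ : ∀ v w, ¬ G₁.OutputVertex v → ¬ G₁.OutputVertex w → k₁ v = k₁ w → v = w
  injV₂ : ∀ v w, ¬ G₂.InputVertex v → ¬ G₂.InputVertex w → k₂ v = k₂ w → v = w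
  disjV : ∀ v w, ¬ G₁.OutputVertex v → ¬ G₂.InputVertex w → k₁ v ≠ k₂ w
  coverV : ∀ u : G.V,
    (∃ v, ¬ G₁.OutputVertex v ∧ k₁ v = u) ∨ (∃ w, ¬ G₂.InputVertex w ∧ k₂ w = u)
  bdry : ∀ u : G.V,
    u ∈ G.σ ↔ (∃ v, G₁.InputVertex v ∧ k₁ v = u) ∨ (∃ w, G₂.OutputVertex w ∧ k₂ w = u)

/-- `lt` is the shuffle-style composed linear order `lt₂ ∘ lt₁` on the edges of the
composite: it restricts to `lt₁` on `E(G₁)` and to `lt₂` on `E(G₂)`, and an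
unidentified edge of `G₁` precedes an unidentified edge of `G₂` iff some identified
edge `ē = j₁ o = j₂ i` lies weakly between them. -/
def IsCompOrder {G₁ G₂ G : PGraph} (C : CompData G₁ G₂ G)
    (lt₁ : G₁.E → G₁.E → Prop) (lt₂ : G₂.E → G₂.E → Prop)
    (lt : G.E → G.E → Prop) : Prop :=
  (∀ a a', lt₁ a a' ↔ lt (C.j₁ a) (C.j₁ a')) ∧
  (∀ b b', lt₂ b b' ↔ lt (C.j₂ b) (C.j₂ b')) ∧
  (∀ a b, (∀ b', C.j₁ a ≠ C.j₂ b') → (∀ a', C.j₂ b ≠ C.j₁ a') →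
    (lt (C.j₁ a) (C.j₂ b) ↔
      ∃ o i, C.j₁ o = C.j₂ i ∧ G₁.le lt₁ a o ∧ G₂.le lt₂ i b))

namespace PGraph

variable {G : PGraph} {lt : G.E → G.E → Prop}

protected theorem le_trans [IsTrans G.E lt] {a b c : G.E} (hab : G.le lt a b)
    (hbc : G.le lt b c) : G.le lt a c := by
  rcases hab with hab | rfl
  · rcases hbc with hbc | rfl
    · exact Or.inl (_root_.trans hab hbc)
    · exact Or.inl hab
  · exact hbc

protected theorem lt_iff_le_and_ne [Std.Irrefl lt] {a b : G.E} : lt a b ↔ G.le lt a b ∧ a ≠ b :=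
  ⟨fun h => ⟨Or.inl h, ne_of_irrefl h⟩, fun ⟨h, hne⟩ => h.resolve_right hne⟩

protected theorem lt_iff_not_le [IsStrictTotalOrder G.E lt] {a b : G.E} :
    lt a b ↔ ¬ G.le lt b a := by
  refine ⟨fun h h' => ?_, fun h => ?_⟩
  · rcases h' with h' | rfl
    · exact irrefl_of lt _ (_root_.trans h h')
    · exact irrefl_of lt _ h
  · rcases trichotomous_of lt a b with h' | rfl | h'
    · exact h'
    · exact absurd (Or.inr rfl) h
    · exact absurd (Or.inl h') h

theorem eq_of_le_iff_or_le_iff_swap {lt' : G.E → G.E → Prop}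
    [IsStrictTotalOrder G.E lt] [IsStrictTotalOrder G.E lt']
    (h : ∀ a b, (G.le lt a b ↔ G.le lt' a b) ∨ (G.le lt b a ↔ G.le lt' b a)) : lt = lt' := by
  funext a b
  refine propext ?_
  rcases h a b with h | h
  · exact PGraph.lt_iff_le_and_ne.trans ((and_congr_left' h).trans PGraph.lt_iff_le_and_ne.symm)
  · exact PGraph.lt_iff_not_le.trans ((not_congr h).trans PGraph.lt_iff_not_le.symm)

end PGraph

namespace IsCompOrder

variable {G₁ G₂ G : PGraph} {C : CompData G₁ G₂ G} {lt₁ : G₁.E → G₁.E → Prop}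
  {lt₂ : G₂.E → G₂.E → Prop} {lt : G.E → G.E → Prop}

theorem le_j₁_iff (hC : IsCompOrder C lt₁ lt₂ lt) (a a' : G₁.E) :
    G.le lt (C.j₁ a) (C.j₁ a') ↔ G₁.le lt₁ a a' :=
  or_congr (hC.1 a a').symm C.inj₁.eq_iff

theorem le_j₂_iff (hC : IsCompOrder C lt₁ lt₂ lt) (b b' : G₂.E) :
    G.le lt (C.j₂ b) (C.j₂ b') ↔ G₂.le lt₂ b b' :=
  or_congr (hC.2.1 b b').symm C.inj₂.eq_iff

/-- The shuffle rule extended to all pairs: an identified edge of `G₁` or `G₂` serves as its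
own witness. -/
theorem le_j₁_j₂_iff (hC : IsCompOrder C lt₁ lt₂ lt) [IsTrans G.E lt] (a : G₁.E) (b : G₂.E) :
    G.le lt (C.j₁ a) (C.j₂ b) ↔
      ∃ o i, C.j₁ o = C.j₂ i ∧ G₁.le lt₁ a o ∧ G₂.le lt₂ i b := by
  constructor
  · intro h
    by_cases ha : G₁.OutputEdge a
    · obtain ⟨i, -, hai⟩ := C.glueOut a ha
      exact ⟨a, i, hai, Or.inr rfl, (hC.le_j₂_iff i b).1 (hai ▸ h)⟩
    by_cases hb : G₂.InputEdge b
    · obtain ⟨o, -, hob⟩ := C.glueIn b hb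
      exact ⟨o, b, hob, (hC.le_j₁_iff a o).1 (hob ▸ h), Or.inr rfl⟩
    have hab : ∀ b', C.j₁ a ≠ C.j₂ b' := fun b' h => ha (C.glue a b' h).1
    have hba : ∀ a', C.j₂ b ≠ C.j₁ a' := fun a' h => hb (C.glue a' b h.symm).2
    exact (hC.2.2 a b hab hba).1 (h.resolve_right (hab b))
  · rintro ⟨o, i, hoi, hao, hib⟩
    exact PGraph.le_trans ((hC.le_j₁_iff a o).2 hao) (hoi ▸ (hC.le_j₂_iff i b).2 hib)

end IsCompOrder

/-- `G` presented both as `G₃ ∘ (G₂ ∘ G₁)` (through `C₁`, `C₂`) and as `(G₃ ∘ G₂) ∘ G₁`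
(through `D₁`, `D₂`), the two presentations embedding the edges of each `Gₖ` alike. -/
structure TripleComp (G₁ G₂ G₃ G₁₂ G₂₃ G : PGraph) where
  C₁ : CompData G₁ G₂ G₁₂
  C₂ : CompData G₁₂ G₃ G
  D₁ : CompData G₂ G₃ G₂₃
  D₂ : CompData G₁ G₂₃ G
  coh₁ : ∀ a, C₂.j₁ (C₁.j₁ a) = D₂.j₁ a
  coh₂ : ∀ b, C₂.j₁ (C₁.j₂ b) = D₂.j₂ (D₁.j₁ b)
  coh₃ : ∀ c, C₂.j₂ c = D₂.j₂ (D₁.j₂ c)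

namespace TripleComp

variable {G₁ G₂ G₃ G₁₂ G₂₃ G : PGraph} (T : TripleComp G₁ G₂ G₃ G₁₂ G₂₃ G)

def ι₁ (a : G₁.E) : G.E := T.C₂.j₁ (T.C₁.j₁ a)

def ι₂ (b : G₂.E) : G.E := T.C₂.j₁ (T.C₁.j₂ b)

def ι₃ (c : G₃.E) : G.E := T.C₂.j₂ c

theorem exists_eq_ι (e : G.E) :
    (∃ a, T.ι₁ a = e) ∨ (∃ b, T.ι₂ b = e) ∨ (∃ c, T.ι₃ c = e) := by
  rcases T.C₂.coverE e with ⟨x, rfl⟩ | ⟨c, rfl⟩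
  · rcases T.C₁.coverE x with ⟨a, rfl⟩ | ⟨b, rfl⟩
    · exact Or.inl ⟨a, rfl⟩
    · exact Or.inr (Or.inl ⟨b, rfl⟩)
  · exact Or.inr (Or.inr ⟨c, rfl⟩)

theorem D₂_j₁_eq_j₂_iff (a : G₁.E) (y : G₂₃.E) :
    T.D₂.j₁ a = T.D₂.j₂ y ↔ ∃ i, T.C₁.j₁ a = T.C₁.j₂ i ∧ T.D₁.j₁ i = y := by
  constructor
  · intro h
    obtain ⟨i, -, hai⟩ := T.C₁.glueOut a (T.D₂.glue a y h).1
    refine ⟨i, hai, T.D₂.inj₂ ?_⟩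
    rw [← h, ← T.coh₂, ← hai, T.coh₁]
  · rintro ⟨i, hai, rfl⟩
    rw [← T.coh₁, hai, T.coh₂]

theorem C₂_j₁_eq_j₂_iff (x : G₁₂.E) (c : G₃.E) :
    T.C₂.j₁ x = T.C₂.j₂ c ↔ ∃ b, T.C₁.j₂ b = x ∧ T.D₁.j₁ b = T.D₁.j₂ c := by
  constructor
  · intro h
    rcases T.C₁.coverE x with ⟨a, rfl⟩ | ⟨b, rfl⟩
    · rw [T.coh₁, T.coh₃, D₂_j₁_eq_j₂_iff] at h
      obtain ⟨i, hai, hi⟩ := h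
      exact ⟨i, hai.symm, hi⟩
    · rw [T.coh₂, T.coh₃] at h
      exact ⟨b, rfl, T.D₂.inj₂ h⟩
  · rintro ⟨b, rfl, hb⟩
    rw [T.coh₂, hb, T.coh₃]

/-- `lt` is `lt₃ ∘ (lt₂ ∘ lt₁)`. -/
def IsCompVia₁₂ (lt₁ : G₁.E → G₁.E → Prop) (lt₂ : G₂.E → G₂.E → Prop)
    (lt₃ : G₃.E → G₃.E → Prop) (lt : G.E → G.E → Prop) : Prop :=
  ∃ lt₁₂ : G₁₂.E → G₁₂.E → Prop, IsTrans G₁₂.E lt₁₂ ∧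
    IsCompOrder T.C₁ lt₁ lt₂ lt₁₂ ∧ IsCompOrder T.C₂ lt₁₂ lt₃ lt

/-- `lt` is `(lt₃ ∘ lt₂) ∘ lt₁`. -/
def IsCompVia₂₃ (lt₁ : G₁.E → G₁.E → Prop) (lt₂ : G₂.E → G₂.E → Prop)
    (lt₃ : G₃.E → G₃.E → Prop) (lt : G.E → G.E → Prop) : Prop :=
  ∃ lt₂₃ : G₂₃.E → G₂₃.E → Prop, IsTrans G₂₃.E lt₂₃ ∧
    IsCompOrder T.D₁ lt₂ lt₃ lt₂₃ ∧ IsCompOrder T.D₂ lt₁ lt₂₃ lt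

namespace IsCompVia₁₂

variable {T} {lt₁ : G₁.E → G₁.E → Prop} {lt₂ : G₂.E → G₂.E → Prop} {lt₃ : G₃.E → G₃.E → Prop}
  {lt : G.E → G.E → Prop}

theorem le_ι₁_ι₁ (h : T.IsCompVia₁₂ lt₁ lt₂ lt₃ lt) (a a' : G₁.E) :
    G.le lt (T.ι₁ a) (T.ι₁ a') ↔ G₁.le lt₁ a a' := by
  obtain ⟨lt₁₂, -, hC₁, hC₂⟩ := h
  rw [ι₁, ι₁, hC₂.le_j₁_iff, hC₁.le_j₁_iff]

theorem le_ι₂_ι₂ (h : T.IsCompVia₁₂ lt₁ lt₂ lt₃ lt) (b b' : G₂.E) :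
    G.le lt (T.ι₂ b) (T.ι₂ b') ↔ G₂.le lt₂ b b' := by
  obtain ⟨lt₁₂, -, hC₁, hC₂⟩ := h
  rw [ι₂, ι₂, hC₂.le_j₁_iff, hC₁.le_j₂_iff]

theorem le_ι₃_ι₃ (h : T.IsCompVia₁₂ lt₁ lt₂ lt₃ lt) (c c' : G₃.E) :
    G.le lt (T.ι₃ c) (T.ι₃ c') ↔ G₃.le lt₃ c c' := by
  obtain ⟨lt₁₂, -, -, hC₂⟩ := h
  exact hC₂.le_j₂_iff c c'

theorem le_ι₁_ι₂ (h : T.IsCompVia₁₂ lt₁ lt₂ lt₃ lt) (a : G₁.E) (b : G₂.E) :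
    G.le lt (T.ι₁ a) (T.ι₂ b) ↔
      ∃ o i, T.C₁.j₁ o = T.C₁.j₂ i ∧ G₁.le lt₁ a o ∧ G₂.le lt₂ i b := by
  obtain ⟨lt₁₂, _, hC₁, hC₂⟩ := h
  rw [ι₁, ι₂, hC₂.le_j₁_iff, hC₁.le_j₁_j₂_iff]

theorem le_ι₂_ι₃ [IsTrans G.E lt] (h : T.IsCompVia₁₂ lt₁ lt₂ lt₃ lt) (b : G₂.E) (c : G₃.E) :
    G.le lt (T.ι₂ b) (T.ι₃ c) ↔
      ∃ b' i, T.D₁.j₁ b' = T.D₁.j₂ i ∧ G₂.le lt₂ b b' ∧ G₃.le lt₃ i c := by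
  obtain ⟨lt₁₂, _, hC₁, hC₂⟩ := h
  rw [ι₂, ι₃, hC₂.le_j₁_j₂_iff]
  simp only [C₂_j₁_eq_j₂_iff]
  constructor
  · rintro ⟨_, i, ⟨b', rfl, hb'i⟩, hbb', hic⟩
    exact ⟨b', i, hb'i, (hC₁.le_j₂_iff b b').1 hbb', hic⟩
  · rintro ⟨b', i, hb'i, hbb', hic⟩
    exact ⟨_, i, ⟨b', rfl, hb'i⟩, (hC₁.le_j₂_iff b b').2 hbb', hic⟩

theorem le_ι₁_ι₃ [IsTrans G.E lt] (h : T.IsCompVia₁₂ lt₁ lt₂ lt₃ lt) (a : G₁.E) (c : G₃.E) :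
    G.le lt (T.ι₁ a) (T.ι₃ c) ↔
      ∃ o i b i', T.C₁.j₁ o = T.C₁.j₂ i ∧ T.D₁.j₁ b = T.D₁.j₂ i' ∧
        G₁.le lt₁ a o ∧ G₂.le lt₂ i b ∧ G₃.le lt₃ i' c := by
  obtain ⟨lt₁₂, _, hC₁, hC₂⟩ := h
  rw [ι₁, ι₃, hC₂.le_j₁_j₂_iff]
  simp only [C₂_j₁_eq_j₂_iff]
  constructor
  · rintro ⟨_, i', ⟨b, rfl, hbi'⟩, hab, hi'c⟩
    obtain ⟨o, i, hoi, hao, hib⟩ := (hC₁.le_j₁_j₂_iff a b).1 hab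
    exact ⟨o, i, b, i', hoi, hbi', hao, hib, hi'c⟩
  · rintro ⟨o, i, b, i', hoi, hbi', hao, hib, hi'c⟩
    exact ⟨_, i', ⟨b, rfl, hbi'⟩, (hC₁.le_j₁_j₂_iff a b).2 ⟨o, i, hoi, hao, hib⟩, hi'c⟩

end IsCompVia₁₂

namespace IsCompVia₂₃

variable {T} {lt₁ : G₁.E → G₁.E → Prop} {lt₂ : G₂.E → G₂.E → Prop} {lt₃ : G₃.E → G₃.E → Prop}
  {lt : G.E → G.E → Prop}

theorem le_ι₁_ι₁ (h : T.IsCompVia₂₃ lt₁ lt₂ lt₃ lt) (a a' : G₁.E) :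
    G.le lt (T.ι₁ a) (T.ι₁ a') ↔ G₁.le lt₁ a a' := by
  obtain ⟨lt₂₃, -, -, hD₂⟩ := h
  rw [ι₁, ι₁, T.coh₁, T.coh₁, hD₂.le_j₁_iff]

theorem le_ι₂_ι₂ (h : T.IsCompVia₂₃ lt₁ lt₂ lt₃ lt) (b b' : G₂.E) :
    G.le lt (T.ι₂ b) (T.ι₂ b') ↔ G₂.le lt₂ b b' := by
  obtain ⟨lt₂₃, -, hD₁, hD₂⟩ := h
  rw [ι₂, ι₂, T.coh₂, T.coh₂, hD₂.le_j₂_iff, hD₁.le_j₁_iff]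

theorem le_ι₃_ι₃ (h : T.IsCompVia₂₃ lt₁ lt₂ lt₃ lt) (c c' : G₃.E) :
    G.le lt (T.ι₃ c) (T.ι₃ c') ↔ G₃.le lt₃ c c' := by
  obtain ⟨lt₂₃, -, hD₁, hD₂⟩ := h
  rw [ι₃, ι₃, T.coh₃, T.coh₃, hD₂.le_j₂_iff, hD₁.le_j₂_iff]

theorem le_ι₁_ι₂ [IsTrans G.E lt] (h : T.IsCompVia₂₃ lt₁ lt₂ lt₃ lt) (a : G₁.E) (b : G₂.E) :
    G.le lt (T.ι₁ a) (T.ι₂ b) ↔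
      ∃ o i, T.C₁.j₁ o = T.C₁.j₂ i ∧ G₁.le lt₁ a o ∧ G₂.le lt₂ i b := by
  obtain ⟨lt₂₃, -, hD₁, hD₂⟩ := h
  rw [ι₁, ι₂, T.coh₁, T.coh₂, hD₂.le_j₁_j₂_iff]
  simp only [D₂_j₁_eq_j₂_iff]
  constructor
  · rintro ⟨o, _, ⟨i, hoi, rfl⟩, hao, hib⟩
    exact ⟨o, i, hoi, hao, (hD₁.le_j₁_iff i b).1 hib⟩
  · rintro ⟨o, i, hoi, hao, hib⟩
    exact ⟨o, _, ⟨i, hoi, rfl⟩, hao, (hD₁.le_j₁_iff i b).2 hib⟩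

theorem le_ι₂_ι₃ (h : T.IsCompVia₂₃ lt₁ lt₂ lt₃ lt) (b : G₂.E) (c : G₃.E) :
    G.le lt (T.ι₂ b) (T.ι₃ c) ↔
      ∃ b' i, T.D₁.j₁ b' = T.D₁.j₂ i ∧ G₂.le lt₂ b b' ∧ G₃.le lt₃ i c := by
  obtain ⟨lt₂₃, _, hD₁, hD₂⟩ := h
  rw [ι₂, ι₃, T.coh₂, T.coh₃, hD₂.le_j₂_iff, hD₁.le_j₁_j₂_iff]

theorem le_ι₁_ι₃ [IsTrans G.E lt] (h : T.IsCompVia₂₃ lt₁ lt₂ lt₃ lt) (a : G₁.E) (c : G₃.E) :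
    G.le lt (T.ι₁ a) (T.ι₃ c) ↔
      ∃ o i b i', T.C₁.j₁ o = T.C₁.j₂ i ∧ T.D₁.j₁ b = T.D₁.j₂ i' ∧
        G₁.le lt₁ a o ∧ G₂.le lt₂ i b ∧ G₃.le lt₃ i' c := by
  obtain ⟨lt₂₃, _, hD₁, hD₂⟩ := h
  rw [ι₁, ι₃, T.coh₁, T.coh₃, hD₂.le_j₁_j₂_iff]
  simp only [D₂_j₁_eq_j₂_iff]
  constructor
  · rintro ⟨o, _, ⟨i, hoi, rfl⟩, hao, hic⟩
    obtain ⟨b, i', hbi', hib, hi'c⟩ := (hD₁.le_j₁_j₂_iff i c).1 hic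
    exact ⟨o, i, b, i', hoi, hbi', hao, hib, hi'c⟩
  · rintro ⟨o, i, b, i', hoi, hbi', hao, hib, hi'c⟩
    exact ⟨o, _, ⟨i, hoi, rfl⟩, hao, (hD₁.le_j₁_j₂_iff i c).2 ⟨b, i', hbi', hib, hi'c⟩⟩

end IsCompVia₂₃

variable {lt₁ : G₁.E → G₁.E → Prop} {lt₂ : G₂.E → G₂.E → Prop} {lt₃ : G₃.E → G₃.E → Prop}
  {ltA ltB : G.E → G.E → Prop}

theorem le_iff_or_le_iff_swap [IsTrans G.E ltA] [IsTrans G.E ltB]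
    (hA : T.IsCompVia₁₂ lt₁ lt₂ lt₃ ltA) (hB : T.IsCompVia₂₃ lt₁ lt₂ lt₃ ltB) (e f : G.E) :
    (G.le ltA e f ↔ G.le ltB e f) ∨ (G.le ltA f e ↔ G.le ltB f e) := by
  rcases T.exists_eq_ι e with ⟨a, rfl⟩ | ⟨b, rfl⟩ | ⟨c, rfl⟩ <;>
    rcases T.exists_eq_ι f with ⟨a', rfl⟩ | ⟨b', rfl⟩ | ⟨c', rfl⟩
  · exact .inl ((hA.le_ι₁_ι₁ a a').trans (hB.le_ι₁_ι₁ a a').symm)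
  · exact .inl ((hA.le_ι₁_ι₂ a b').trans (hB.le_ι₁_ι₂ a b').symm)
  · exact .inl ((hA.le_ι₁_ι₃ a c').trans (hB.le_ι₁_ι₃ a c').symm)
  · exact .inr ((hA.le_ι₁_ι₂ a' b).trans (hB.le_ι₁_ι₂ a' b).symm)
  · exact .inl ((hA.le_ι₂_ι₂ b b').trans (hB.le_ι₂_ι₂ b b').symm)
  · exact .inl ((hA.le_ι₂_ι₃ b c').trans (hB.le_ι₂_ι₃ b c').symm)
  · exact .inr ((hA.le_ι₁_ι₃ a' c).trans (hB.le_ι₁_ι₃ a' c).symm)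
  · exact .inr ((hA.le_ι₂_ι₃ b' c).trans (hB.le_ι₂_ι₃ b' c).symm)
  · exact .inl ((hA.le_ι₃_ι₃ c c').trans (hB.le_ι₃_ι₃ c c').symm)

theorem IsCompVia₁₂.eq_of_isCompVia₂₃ [IsStrictTotalOrder G.E ltA] [IsStrictTotalOrder G.E ltB]
    (hA : T.IsCompVia₁₂ lt₁ lt₂ lt₃ ltA) (hB : T.IsCompVia₂₃ lt₁ lt₂ lt₃ ltB) : ltA = ltB :=
  PGraph.eq_of_le_iff_or_le_iff_swap (T.le_iff_or_le_iff_swap hA hB)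

end TripleComp

theorem comp_assoc_general (G₁ G₂ G₃ G₁₂ G₂₃ G : PGraph)
    (lt₁ : G₁.E → G₁.E → Prop) (lt₂ : G₂.E → G₂.E → Prop) (lt₃ : G₃.E → G₃.E → Prop)
    (lt₁₂ : G₁₂.E → G₁₂.E → Prop) (lt₂₃ : G₂₃.E → G₂₃.E → Prop)
    (ltA ltB : G.E → G.E → Prop)
    (C₁ : CompData G₁ G₂ G₁₂) (C₂ : CompData G₁₂ G₃ G)
    (D₁ : CompData G₂ G₃ G₂₃) (D₂ : CompData G₁ G₂₃ G)
    (hst₁₂ : IsStrictTotalOrder G₁₂.E lt₁₂) (hst₂₃ : IsStrictTotalOrder G₂₃.E lt₂₃)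
    (hstA : IsStrictTotalOrder G.E ltA) (hstB : IsStrictTotalOrder G.E ltB)
    (hC₁ : IsCompOrder C₁ lt₁ lt₂ lt₁₂) (hC₂ : IsCompOrder C₂ lt₁₂ lt₃ ltA)
    (hD₁ : IsCompOrder D₁ lt₂ lt₃ lt₂₃) (hD₂ : IsCompOrder D₂ lt₁ lt₂₃ ltB)
    (hcoh₁ : ∀ a, C₂.j₁ (C₁.j₁ a) = D₂.j₁ a)
    (hcoh₂ : ∀ b, C₂.j₁ (C₁.j₂ b) = D₂.j₂ (D₁.j₁ b))
    (hcoh₃ : ∀ c, C₂.j₂ c = D₂.j₂ (D₁.j₂ c)) :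
    ltA = ltB :=
  TripleComp.IsCompVia₁₂.eq_of_isCompVia₂₃ (T := ⟨C₁, C₂, D₁, D₂, hcoh₁, hcoh₂, hcoh₃⟩)
    ⟨lt₁₂, inferInstance, hC₁, hC₂⟩ ⟨lt₂₃, inferInstance, hD₁, hD₂⟩

/-- Associativity of the composition of upward planar orders. -/
theorem comp_assoc (G₁ G₂ G₃ G₁₂ G₂₃ G : PGraph)
    [Fintype G₁.E] [Fintype G₂.E] [Fintype G₃.E]
    [Fintype G₁₂.E] [Fintype G₂₃.E] [Fintype G.E]
    (lt₁ : G₁.E → G₁.E → Prop) (lt₂ : G₂.E → G₂.E → Prop) (lt₃ : G₃.E → G₃.E → Prop)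
    (lt₁₂ : G₁₂.E → G₁₂.E → Prop) (lt₂₃ : G₂₃.E → G₂₃.E → Prop)
    (ltA ltB : G.E → G.E → Prop)
    (hP₁ : G₁.Progressive) (hA₁ : G₁.Acyclic) (hU₁ : G₁.UPO lt₁) (hAd₁ : G₁.Admissible lt₁)
    (hP₂ : G₂.Progressive) (hA₂ : G₂.Acyclic) (hU₂ : G₂.UPO lt₂) (hAd₂ : G₂.Admissible lt₂)
    (hP₃ : G₃.Progressive) (hA₃ : G₃.Acyclic) (hU₃ : G₃.UPO lt₃) (hAd₃ : G₃.Admissible lt₃)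
    (C₁ : CompData G₁ G₂ G₁₂) (C₂ : CompData G₁₂ G₃ G)
    (D₁ : CompData G₂ G₃ G₂₃) (D₂ : CompData G₁ G₂₃ G)
    (hst₁₂ : IsStrictTotalOrder G₁₂.E lt₁₂) (hst₂₃ : IsStrictTotalOrder G₂₃.E lt₂₃)
    (hstA : IsStrictTotalOrder G.E ltA) (hstB : IsStrictTotalOrder G.E ltB)
    (hC₁ : IsCompOrder C₁ lt₁ lt₂ lt₁₂) (hC₂ : IsCompOrder C₂ lt₁₂ lt₃ ltA)
    (hD₁ : IsCompOrder D₁ lt₂ lt₃ lt₂₃) (hD₂ : IsCompOrder D₂ lt₁ lt₂₃ ltB)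
    (hcoh₁ : ∀ a, C₂.j₁ (C₁.j₁ a) = D₂.j₁ a)
    (hcoh₂ : ∀ b, C₂.j₁ (C₁.j₂ b) = D₂.j₂ (D₁.j₁ b))
    (hcoh₃ : ∀ c, C₂.j₂ c = D₂.j₂ (D₁.j₂ c)) :
    ltA = ltB :=
  comp_assoc_general G₁ G₂ G₃ G₁₂ G₂₃ G lt₁ lt₂ lt₃ lt₁₂ lt₂₃ ltA ltB C₁ C₂ D₁ D₂ hst₁₂ hst₂₃ hstA
    hstB hC₁ hC₂ hD₁ hD₂ hcoh₁ hcoh₂ hcoh₃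
end

section
/- If e₁ → e₂ in the composite graph G = G₂ ∘ G₁ with an edge e₁ of G₁ and an edge e₂ of G₂, then there exists an identified edge ē_k (formed from output oₖ of G₁ and input iₖ of G₂) with e₁ → ē_k in G₁ and ē_k → e₂ in G₂. -/
/-! A path of `G` that starts in `G₁` follows `G₁` until it meets an output edge of `G₁`, which is an
input edge of `G₂`. From there it can never return to `G₁`: an edge of `G₂` followed by an edge of
`G₁` would glue a target of `G₂` to a source of `G₁`, and in progressive acyclic graphs neither is
one of the removed boundary vertices. -/

theorem Relation.ReflTransGen.exists_lift_of_step {α β : Type*} {r : β → β → Prop}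
    {r' : α → α → Prop} {f : α → β} (hf : ∀ a y, r (f a) y → ∃ a', f a' = y ∧ r' a a')
    {a : α} {y : β} (h : Relation.ReflTransGen r (f a) y) :
    ∃ a', f a' = y ∧ Relation.ReflTransGen r' a a' := by
  induction h with
  | refl => exact ⟨a, rfl, .refl⟩
  | tail _ hyz ih =>
    obtain ⟨a', rfl, ha'⟩ := ih
    obtain ⟨a'', rfl, hs⟩ := hf a' _ hyz
    exact ⟨a'', rfl, ha'.tail hs⟩

namespace PGraph

variable {G : PGraph}

-- The unique edge at a boundary leaf would otherwise be a loop.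
theorem not_outputVertex_s (hP : G.Progressive) (hA : G.Acyclic) (a : G.E) :
    ¬ G.OutputVertex (G.s a) := by
  rintro ⟨hσ, e, hte⟩
  obtain ⟨_, _, huniq⟩ := hP _ hσ
  obtain rfl : a = e := (huniq a (Or.inl rfl)).trans (huniq e (Or.inr hte)).symm
  exact hA a (.single hte)

theorem not_inputVertex_t (hP : G.Progressive) (hA : G.Acyclic) (b : G.E) :
    ¬ G.InputVertex (G.t b) := by
  rintro ⟨hσ, e, hse⟩
  obtain ⟨_, _, huniq⟩ := hP _ hσ
  obtain rfl : b = e := (huniq b (Or.inr rfl)).trans (huniq e (Or.inl hse)).symm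
  exact hA b (.single hse.symm)

end PGraph

namespace CompData

variable {G₁ G₂ G : PGraph} (C : CompData G₁ G₂ G)

theorem exists_j₁_or_j₂_not_inputEdge (y : G.E) :
    (∃ a, C.j₁ a = y) ∨ ∃ b, ¬ G₂.InputEdge b ∧ C.j₂ b = y := by
  rcases C.coverE y with hy | ⟨b, rfl⟩
  · exact .inl hy
  by_cases hb : G₂.InputEdge b
  · obtain ⟨a, -, hab⟩ := C.glueIn b hb
    exact .inl ⟨a, hab⟩
  · exact .inr ⟨b, hb, rfl⟩

theorem step_j₁_of_not_outputEdge (hP₁ : G₁.Progressive) (hA₁ : G₁.Acyclic) {a : G₁.E}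
    (ha : ¬ G₁.OutputEdge a) {y : G.E} (h : G.step (C.j₁ a) y) :
    ∃ a', C.j₁ a' = y ∧ G₁.step a a' := by
  unfold PGraph.step at h
  rw [C.tgt₁ a ha] at h
  rcases C.exists_j₁_or_j₂_not_inputEdge y with ⟨a', rfl⟩ | ⟨b, hb, rfl⟩
  · rw [C.src₁] at h
    exact ⟨a', rfl, C.injV₁ _ _ (fun hv => ha hv.1) (G₁.not_outputVertex_s hP₁ hA₁ a') h⟩
  · rw [C.src₂ b hb] at h
    exact (C.disjV _ _ (fun hv => ha hv.1) (fun hv => hb hv.1) h).elim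

theorem step_j₂ (hP₁ : G₁.Progressive) (hA₁ : G₁.Acyclic) (hP₂ : G₂.Progressive)
    (hA₂ : G₂.Acyclic) (b : G₂.E) (y : G.E) (h : G.step (C.j₂ b) y) :
    ∃ b', C.j₂ b' = y ∧ G₂.step b b' := by
  unfold PGraph.step at h
  rw [C.tgt₂] at h
  rcases C.exists_j₁_or_j₂_not_inputEdge y with ⟨a, rfl⟩ | ⟨b', hb', rfl⟩
  · rw [C.src₁] at h
    exact (C.disjV _ _ (G₁.not_outputVertex_s hP₁ hA₁ a)
      (G₂.not_inputVertex_t hP₂ hA₂ b) h.symm).elim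
  · rw [C.src₂ b' hb'] at h
    exact ⟨b', rfl, C.injV₂ _ _ (G₂.not_inputVertex_t hP₂ hA₂ b) (fun hv => hb' hv.1) h⟩

theorem reach_of_reach_j₂ (hP₁ : G₁.Progressive) (hA₁ : G₁.Acyclic) (hP₂ : G₂.Progressive)
    (hA₂ : G₂.Acyclic) {b b' : G₂.E} (h : G.reach (C.j₂ b) (C.j₂ b')) : G₂.reach b b' := by
  obtain ⟨b'', hb'', hreach⟩ := h.exists_lift_of_step (C.step_j₂ hP₁ hA₁ hP₂ hA₂)
  rwa [← C.inj₂ hb'']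

end CompData

theorem reach_through_identified_edge_general (G₁ G₂ G : PGraph)
    (hP₁ : G₁.Progressive) (hA₁ : G₁.Acyclic)
    (hP₂ : G₂.Progressive) (hA₂ : G₂.Acyclic)
    (C : CompData G₁ G₂ G)
    (e₁ : G₁.E) (e₂ : G₂.E) (h : G.reach (C.j₁ e₁) (C.j₂ e₂)) :
    ∃ o i, G₁.OutputEdge o ∧ C.j₁ o = C.j₂ i ∧ G₁.reach e₁ o ∧ G₂.reach i e₂ := by
  suffices H : ∀ x, G.reach x (C.j₂ e₂) → ∀ a, C.j₁ a = x →
      ∃ o i, G₁.OutputEdge o ∧ C.j₁ o = C.j₂ i ∧ G₁.reach a o ∧ G₂.reach i e₂ from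
    H _ h e₁ rfl
  intro x hx
  induction hx using Relation.ReflTransGen.head_induction_on with
  | refl => exact fun a ha => ⟨a, e₂, (C.glue a e₂ ha).1, ha, .refl, .refl⟩
  | head hstep hrest ih =>
    rintro a rfl
    by_cases hout : G₁.OutputEdge a
    · obtain ⟨i, -, hai⟩ := C.glueOut a hout
      have hreach : G.reach (C.j₂ i) (C.j₂ e₂) := hai ▸ hrest.head hstep
      exact ⟨a, i, hout, hai, .refl, C.reach_of_reach_j₂ hP₁ hA₁ hP₂ hA₂ hreach⟩
    · obtain ⟨a', rfl, hs⟩ := C.step_j₁_of_not_outputEdge hP₁ hA₁ hout hstep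
      obtain ⟨o, i, ho, hoi, h₁, h₂⟩ := ih a' rfl
      exact ⟨o, i, ho, hoi, h₁.head hs, h₂⟩

/-- If an edge of `G₁` reaches an edge of `G₂` in the composite `G = G₂ ∘ G₁`, then
there is an identified edge `ē_k = j₁ o = j₂ i` with `e₁ → o` in `G₁` and
`i → e₂` in `G₂`. -/
theorem reach_through_identified_edge (G₁ G₂ G : PGraph)
    [Fintype G₁.E] [Fintype G₂.E] [Fintype G.E]
    (hP₁ : G₁.Progressive) (hA₁ : G₁.Acyclic)
    (hP₂ : G₂.Progressive) (hA₂ : G₂.Acyclic)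
    (C : CompData G₁ G₂ G)
    (e₁ : G₁.E) (e₂ : G₂.E) (h : G.reach (C.j₁ e₁) (C.j₂ e₂)) :
    ∃ o i, G₁.OutputEdge o ∧ C.j₁ o = C.j₂ i ∧ G₁.reach e₁ o ∧ G₂.reach i e₂ :=
  reach_through_identified_edge_general G₁ G₂ G hP₁ hA₁ hP₂ hA₂ C e₁ e₂ h
end

section
/- Under the composed linear order ≺ on E(G₂ ∘ G₁), every processive vertex v of G = G₂ ∘ G₁ satisfies O(v)⁻ = I(v)⁺ + 1, i.e., the minimal outgoing edge of v is the immediate successor of the maximal incoming edge of v. -/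
/-!
The vertex `v` comes from an inner vertex `w` of `G₁` or of `G₂`; reversing every edge and every
order exchanges the two factors, so we may assume `w` lies in `G₁`, and then the edges at `v`
are the images of the edges at `w`. Let `e` lie strictly between `I(v)` and `O(v)`. If `e` is
an edge `c` of `G₁`, then the nesting condition for `a ≺₁ c ≺₁ o` (`a ∈ I(w)`, `o ∈ O(w)`)
puts `c` into `conv I(w)` or `conv O(w)`, both impossible. Otherwise `e` is an unglued edge of
`G₂`, and by the definition of the composed order some glued edge `ō` of `G₁` satisfies
`a ≼₁ ō ≺ e`; as `ō` also precedes `O(w)`, the nesting condition puts this output edge into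
`conv I(w)`, against admissibility.
-/

namespace PGraph

variable {G : PGraph} {lt : G.E → G.E → Prop}

theorem le.not_lt [IsStrictOrder G.E lt] {a b : G.E} (h : G.le lt a b) : ¬ lt b a := by
  rcases h with h | rfl
  · exact asymm h
  · exact irrefl a

theorem mem_conv_I_of_lt_of_forall_lt_O [IsStrictOrder G.E lt] (hQ : G.Q2 lt)
    {w : G.V} {a o c : G.E} (ha : a ∈ G.I w) (ho : o ∈ G.O w) (hac : lt a c)
    (hcO : ∀ x ∈ G.O w, lt c x) : c ∈ G.conv lt (G.I w) := by
  rcases (hQ a c o hac (hcO o ho)).2.2 (ha.trans ho.symm) with h | h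
  · exact ha ▸ h (rfl : c ∈ G.I (G.t c))
  · obtain ⟨x, hx, -, -, hxc, -⟩ := h (rfl : c ∈ G.O (G.s c))
    exact (hxc.not_lt (hcO x (hx.trans ho))).elim

variable (G) in
def StepsThroughInner : Prop := ∀ e f : G.E, G.step e f → G.Inner (G.t e)

theorem Progressive.stepsThroughInner (hP : G.Progressive) (hA : G.Acyclic) :
    G.StepsThroughInner := by
  intro e f hef hσ
  obtain ⟨g, -, hg⟩ := hP _ hσ
  obtain rfl : e = f := (hg e (Or.inr rfl)).trans (hg f (Or.inl hef.symm)).symm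
  exact hA e (.single hef)

theorem StepsThroughInner.not_outputVertex_s (h : G.StepsThroughInner) (a : G.E) :
    ¬ G.OutputVertex (G.s a) := fun ⟨hσ, e, he⟩ => h e a he (he ▸ hσ)

theorem StepsThroughInner.not_inputVertex_t (h : G.StepsThroughInner) (b : G.E) :
    ¬ G.InputVertex (G.t b) := fun ⟨hσ, f, hf⟩ => h b f hf.symm hσ

variable (G) in
abbrev reverse : PGraph := ⟨G.V, G.E, G.t, G.s, G.σ⟩

theorem reverse_I (v : G.V) : G.reverse.I v = G.O v := rfl

theorem reverse_O (v : G.V) : G.reverse.O v = G.I v := rfl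

theorem reverse_le_swap {a b : G.E} : G.reverse.le (Function.swap lt) a b ↔ G.le lt b a :=
  or_congr_right eq_comm

theorem reverse_conv_swap (X : Set G.E) : G.reverse.conv (Function.swap lt) X = G.conv lt X := by
  ext y
  exact ⟨fun ⟨a, ha, b, hb, hay, hyb⟩ =>
      ⟨b, hb, a, ha, reverse_le_swap.1 hyb, reverse_le_swap.1 hay⟩,
    fun ⟨a, ha, b, hb, hay, hyb⟩ => ⟨b, hb, a, ha, reverse_le_swap.2 hyb, reverse_le_swap.2 hay⟩⟩

theorem StepsThroughInner.reverse (h : G.StepsThroughInner) : G.reverse.StepsThroughInner :=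
  fun e f (hef : G.s e = G.t f) => show G.s e ∉ G.σ from hef ▸ h f e hef.symm

theorem Q2.reverse (hQ : G.Q2 lt) : G.reverse.Q2 (Function.swap lt) := by
  intro e₁ e e₂ h₁ h₂
  obtain ⟨ht, hs, hts⟩ := hQ e₂ e e₁ h₂ h₁
  simp only [reverse_I, reverse_O, reverse_conv_swap]
  exact ⟨fun h => h ▸ hs h.symm, fun h => h ▸ ht h.symm, fun h => (hts h.symm).symm⟩

theorem Admissible.reverse (hAd : G.Admissible lt) : G.reverse.Admissible (Function.swap lt) :=
  fun v hv => by
    simp only [reverse_O, reverse_I, reverse_conv_swap]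
    exact ⟨(hAd v hv).2, (hAd v hv).1⟩

end PGraph

namespace CompData

variable {G₁ G₂ G : PGraph} (C : CompData G₁ G₂ G)

theorem I_k₁_subset_image (hS₂ : G₂.StepsThroughInner) {v : G₁.V}
    (hv : ¬ G₁.OutputVertex v) : G.I (C.k₁ v) ⊆ C.j₁ '' G₁.I v := by
  intro f (hf : G.t f = C.k₁ v)
  have not_j₂ : ∀ b, C.j₂ b ≠ f := fun b hb =>
    C.disjV v (G₂.t b) hv (hS₂.not_inputVertex_t b) (by rw [← C.tgt₂, hb, hf])
  obtain ⟨a, rfl⟩ := (C.coverE f).resolve_right fun ⟨b, hb⟩ => not_j₂ b hb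
  have ha : ¬ G₁.OutputEdge a := fun ha =>
    let ⟨b, _, hab⟩ := C.glueOut a ha
    not_j₂ b hab.symm
  exact ⟨a, C.injV₁ _ _ (fun h => ha h.1) hv (by rw [← C.tgt₁ a ha, hf]), rfl⟩

theorem O_k₁_subset_image (hS₁ : G₁.StepsThroughInner) {v : G₁.V}
    (hv : ¬ G₁.OutputVertex v) : G.O (C.k₁ v) ⊆ C.j₁ '' G₁.O v := by
  intro f (hf : G.s f = C.k₁ v)
  obtain ⟨a, rfl⟩ : ∃ a, C.j₁ a = f := by
    rcases C.coverE f with h | ⟨b, rfl⟩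
    · exact h
    by_cases hb : G₂.InputEdge b
    · obtain ⟨a, -, hab⟩ := C.glueIn b hb
      exact ⟨a, hab⟩
    · exact (C.disjV v (G₂.s b) hv (fun h => hb h.1) (by rw [← C.src₂ b hb, hf])).elim
  exact ⟨a, C.injV₁ _ _ (hS₁.not_outputVertex_s a) hv (by rw [← C.src₁, hf]), rfl⟩

theorem image_I_subset_I_k₁ {v : G₁.V} (hv : G₁.Inner v) : C.j₁ '' G₁.I v ⊆ G.I (C.k₁ v) := by
  rintro _ ⟨a, rfl : G₁.t a = v, rfl⟩
  exact C.tgt₁ a hv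

theorem image_O_subset_O_k₁ (v : G₁.V) : C.j₁ '' G₁.O v ⊆ G.O (C.k₁ v) := by
  rintro _ ⟨a, rfl : G₁.s a = v, rfl⟩
  exact C.src₁ a

variable {lt₁ : G₁.E → G₁.E → Prop} {lt₂ : G₂.E → G₂.E → Prop} {lt : G.E → G.E → Prop}

theorem not_exists_between_j₁ [IsStrictOrder G₁.E lt₁] [IsStrictOrder G.E lt]
    (hQ : G₁.Q2 lt₁) (hAd : G₁.Admissible lt₁) (hC : IsCompOrder C lt₁ lt₂ lt)
    {w : G₁.V} (hw : G₁.Inner w) {a o : G₁.E} (ha : a ∈ G₁.I w) (ho : o ∈ G₁.O w) :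
    ¬ ∃ e, (∀ i ∈ G₁.I w, lt (C.j₁ i) e) ∧ (∀ x ∈ G₁.O w, lt e (C.j₁ x)) := by
  rintro ⟨e, hIe, hOe⟩
  obtain ⟨hlt₁, hlt₂, hmix⟩ := hC
  by_cases he : ∃ c, C.j₁ c = e
  · obtain ⟨c, rfl⟩ := he
    obtain ⟨-, -, y, hy, -, hcy⟩ := G₁.mem_conv_I_of_lt_of_forall_lt_O hQ ha ho
      ((hlt₁ _ _).2 (hIe a ha)) fun x hx => (hlt₁ _ _).2 (hOe x hx)
    exact hcy.not_lt ((hlt₁ _ _).2 (hIe y hy))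
  · obtain ⟨b, rfl⟩ := (C.coverE e).resolve_left he
    have ha_out : ¬ G₁.OutputEdge a := fun h => hw (ha ▸ h)
    obtain ⟨ō, i, hōi, haō, hib⟩ := (hmix a b (fun b' h => ha_out (C.glue a b' h).1)
      (fun a' h => he ⟨a', h.symm⟩)).1 (hIe a ha)
    have hō_out : G₁.OutputEdge ō := (C.glue ō i hōi).1
    have hōb : lt (C.j₁ ō) (C.j₂ b) := by
      rcases hib with hib | rfl
      · exact hōi ▸ (hlt₂ i b).1 hib
      · exact (he ⟨ō, hōi⟩).elim
    have haō : lt₁ a ō := by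
      rcases haō with haō | rfl
      · exact haō
      · exact (ha_out hō_out).elim
    exact (hAd w hw).2 ō hō_out (G₁.mem_conv_I_of_lt_of_forall_lt_O hQ ha ho haō
      fun x hx => (hlt₁ _ _).2 (_root_.trans hōb (hOe x hx)))

theorem not_exists_between_k₁ [IsStrictOrder G₁.E lt₁] [IsStrictOrder G.E lt]
    (hS₁ : G₁.StepsThroughInner) (hS₂ : G₂.StepsThroughInner) (hQ : G₁.Q2 lt₁)
    (hAd : G₁.Admissible lt₁) (hC : IsCompOrder C lt₁ lt₂ lt) {v : G₁.V}
    (hv : ¬ G₁.OutputVertex v) (hI : (G.I (C.k₁ v)).Nonempty) (hO : (G.O (C.k₁ v)).Nonempty) :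
    ¬ ∃ e, (∀ i ∈ G.I (C.k₁ v), lt i e) ∧ (∀ o ∈ G.O (C.k₁ v), lt e o) := by
  obtain ⟨a, ha⟩ := (hI.mono (C.I_k₁_subset_image hS₂ hv)).of_image
  obtain ⟨o, ho⟩ := (hO.mono (C.O_k₁_subset_image hS₁ hv)).of_image
  have hw : G₁.Inner v := fun hσ => hv ⟨hσ, a, ha⟩
  rintro ⟨e, hIe, hOe⟩
  exact C.not_exists_between_j₁ hQ hAd hC hw ha ho
    ⟨e, fun i hi => hIe _ (C.image_I_subset_I_k₁ hw ⟨i, hi, rfl⟩),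
      fun x hx => hOe _ (C.image_O_subset_O_k₁ v ⟨x, hx, rfl⟩)⟩

def reverse : CompData G₂.reverse G₁.reverse G.reverse where
  j₁ := C.j₂
  j₂ := C.j₁
  k₁ := C.k₂
  k₂ := C.k₁
  inj₁ := C.inj₂
  inj₂ := C.inj₁
  coverE e := (C.coverE e).symm
  glue b a h := (C.glue a b h.symm).symm
  glueOut b hb := let ⟨a, ha, hab⟩ := C.glueIn b hb; ⟨a, ha, hab.symm⟩
  glueIn a ha := let ⟨b, hb, hab⟩ := C.glueOut a ha; ⟨b, hb, hab.symm⟩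
  src₁ := C.tgt₂
  tgt₁ := C.src₂
  tgt₂ := C.src₁
  src₂ := C.tgt₁
  injV₁ := C.injV₂
  injV₂ := C.injV₁
  disjV w v hw hv := (C.disjV v w hv hw).symm
  coverV u := (C.coverV u).symm
  bdry u := (C.bdry u).trans or_comm

end CompData

theorem IsCompOrder.reverse {G₁ G₂ G : PGraph} {C : CompData G₁ G₂ G}
    {lt₁ : G₁.E → G₁.E → Prop} {lt₂ : G₂.E → G₂.E → Prop} {lt : G.E → G.E → Prop}
    (hC : IsCompOrder C lt₁ lt₂ lt) :
    IsCompOrder C.reverse (Function.swap lt₂) (Function.swap lt₁) (Function.swap lt) := by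
  obtain ⟨hlt₁, hlt₂, hmix⟩ := hC
  refine ⟨fun b b' => hlt₂ b' b, fun a a' => hlt₁ a' a, fun b a hb ha => ?_⟩
  exact (hmix a b ha hb).trans
    ⟨fun ⟨o, i, hoi, hao, hib⟩ =>
      ⟨i, o, hoi.symm, PGraph.reverse_le_swap.2 hib, PGraph.reverse_le_swap.2 hao⟩,
    fun ⟨i, o, hio, hbi, hoa⟩ =>
      ⟨o, i, hio.symm, PGraph.reverse_le_swap.1 hoa, PGraph.reverse_le_swap.1 hbi⟩⟩

theorem comp_processive_succ_general (G₁ G₂ G : PGraph)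
    (lt₁ : G₁.E → G₁.E → Prop) (lt₂ : G₂.E → G₂.E → Prop) (lt : G.E → G.E → Prop)
    (hP₁ : G₁.Progressive) (hA₁ : G₁.Acyclic) (hU₁ : G₁.UPO lt₁) (hAd₁ : G₁.Admissible lt₁)
    (hP₂ : G₂.Progressive) (hA₂ : G₂.Acyclic) (hU₂ : G₂.UPO lt₂) (hAd₂ : G₂.Admissible lt₂)
    (C : CompData G₁ G₂ G) (hst : IsStrictTotalOrder G.E lt)
    (hC : IsCompOrder C lt₁ lt₂ lt) :
    ∀ v : G.V, (G.I v).Nonempty → (G.O v).Nonempty →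
      ¬ ∃ e : G.E, (∀ i ∈ G.I v, lt i e) ∧ (∀ o ∈ G.O v, lt e o) := by
  intro v hI hO
  have hS₁ := hP₁.stepsThroughInner hA₁
  have hS₂ := hP₂.stepsThroughInner hA₂
  have := hU₁.1
  rcases C.coverV v with ⟨v₁, hv₁, rfl⟩ | ⟨v₂, hv₂, rfl⟩
  · exact C.not_exists_between_k₁ hS₁ hS₂ hU₁.2.2 hAd₁ hC hv₁ hI hO
  · have := hU₂.1
    rintro ⟨e, hIe, hOe⟩
    exact C.reverse.not_exists_between_k₁ hS₂.reverse hS₁.reverse hU₂.2.2.reverse hAd₂.reverse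
      hC.reverse hv₂ hO hI ⟨e, hOe, hIe⟩

/-- Under the composed linear order, every processive vertex `v` of the composite
satisfies `O(v)⁻ = I(v)⁺ + 1`: there is no edge strictly between all incoming
edges and all outgoing edges of `v`. -/
theorem comp_processive_succ (G₁ G₂ G : PGraph)
    [Fintype G₁.E] [Fintype G₂.E] [Fintype G.E]
    (lt₁ : G₁.E → G₁.E → Prop) (lt₂ : G₂.E → G₂.E → Prop) (lt : G.E → G.E → Prop)
    (hP₁ : G₁.Progressive) (hA₁ : G₁.Acyclic) (hU₁ : G₁.UPO lt₁) (hAd₁ : G₁.Admissible lt₁)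
    (hP₂ : G₂.Progressive) (hA₂ : G₂.Acyclic) (hU₂ : G₂.UPO lt₂) (hAd₂ : G₂.Admissible lt₂)
    (C : CompData G₁ G₂ G) (hst : IsStrictTotalOrder G.E lt)
    (hC : IsCompOrder C lt₁ lt₂ lt) :
    ∀ v : G.V, (G.I v).Nonempty → (G.O v).Nonempty →
      ¬ ∃ e : G.E, (∀ i ∈ G.I v, lt i e) ∧ (∀ o ∈ G.O v, lt e o) :=
  comp_processive_succ_general G₁ G₂ G lt₁ lt₂ lt hP₁ hA₁ hU₁ hAd₁ hP₂ hA₂ hU₂ hAd₂ C hst hC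
end
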